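/- arXiv:math/0401293 — 6 statements merged into one kernel-verified Lean document; each statement's English description precedes it below -/
import Mathlib

section
/- Every metric space on n points whose pairwise distances are all distinct admits a monotone embedding into n-dimensional Euclidean space: there exists φ : X → ℝⁿ such that δ(x,y) < δ(w,z) if and only if ‖φ(x)−φ(y)‖₂ < ‖φ(w)−φ(z)‖₂. In fact, it suffices that the map realizes any prescribed linear order on distances. -/
/-!
For small `c > 0` the matrix with unit diagonal and off-diagonal entries `-c δ(x, y)` is
diagonally dominant, hence positive semidefinite by Gershgorin's theorem, so it is the Gram
matrix of vectors `φ x ∈ ℝⁿ`. Unit diagonal gives `‖φ x - φ y‖² = 2 + 2c δ(x, y)` for `x ≠ y`,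
a strictly increasing function of `δ(x, y)`, while coincident points have distance `0`.
-/

open Finset Matrix
open scoped ComplexOrder

namespace Matrix

variable {𝕜 n : Type*} [RCLike 𝕜] [Fintype n] [DecidableEq n] {A : Matrix n n 𝕜}

theorem IsHermitian.hasEigenvalue_eigenvalues (hA : A.IsHermitian) (i : n) :
    Module.End.HasEigenvalue (toLin' A) (hA.eigenvalues i : 𝕜) := by
  rw [Module.End.hasEigenvalue_iff_mem_spectrum, spectrum_toLin']
  exact spectrum.algebraMap_mem 𝕜 (hA.eigenvalues_mem_spectrum_real i)

theorem IsHermitian.posSemidef_of_sum_row_le_diag (hA : A.IsHermitian)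
    (hdom : ∀ k, ∑ j ∈ univ.erase k, ‖A k j‖ ≤ RCLike.re (A k k)) : A.PosSemidef := by
  refine hA.posSemidef_iff_eigenvalues_nonneg.mpr fun i => ?_
  obtain ⟨k, hk⟩ := eigenvalue_mem_ball (hA.hasEigenvalue_eigenvalues i)
  rw [Metric.mem_closedBall, dist_comm, dist_eq_norm] at hk
  have := RCLike.re_le_norm (A k k - hA.eigenvalues i)
  simp only [map_sub, RCLike.ofReal_re] at this
  simp only [Pi.zero_apply]
  linarith [hdom k]

open scoped MatrixOrder in
theorem PosSemidef.exists_gram_eq (hA : A.PosSemidef) :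
    ∃ v : n → EuclideanSpace 𝕜 n, gram 𝕜 v = A := by
  set B := CFC.sqrt A
  have hB : Bᴴ * B = A := by
    rw [← star_eq_conjTranspose, (IsSelfAdjoint.of_nonneg (CFC.sqrt_nonneg A)).star_eq]
    exact CFC.sqrt_mul_sqrt_self A (nonneg_iff_posSemidef.mpr hA)
  refine ⟨fun i => WithLp.toLp 2 fun k => B k i, ?_⟩
  ext i j
  rw [← hB, gram_apply, EuclideanSpace.inner_eq_star_dotProduct, mul_apply, dotProduct]
  simp [mul_comm]

end Matrix

theorem norm_sub_sq_eq_gram {E n : Type*} [NormedAddCommGroup E] [InnerProductSpace ℝ E]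
    (v : n → E) (i j : n) : ‖v i - v j‖ ^ 2 = gram ℝ v i i - 2 * gram ℝ v i j + gram ℝ v j j := by
  simp only [gram_apply, norm_sub_sq_real, real_inner_self_eq_norm_sq]

theorem exists_sq_norm_sub_eq_two_add {ι : Type*} [Fintype ι] [DecidableEq ι] (δ : ι → ι → ℝ)
    (hsymm : ∀ x y, δ x y = δ y x) :
    ∃ c > 0, ∃ φ : ι → EuclideanSpace ℝ ι, ∀ x y, x ≠ y → ‖φ x - φ y‖ ^ 2 = 2 + 2 * c * δ x y := by
  set S := ∑ i, ∑ j, |δ i j|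
  have hS : 0 ≤ S := by positivity
  set c := (1 + S)⁻¹
  have hc : 0 < c := by positivity
  set A : Matrix ι ι ℝ := of fun i j => if i = j then 1 else -(c * δ i j)
  have hA : A.IsHermitian := by
    ext i j
    simp [A, hsymm i j, eq_comm]
  have hdom : ∀ k, ∑ j ∈ univ.erase k, ‖A k j‖ ≤ RCLike.re (A k k) := by
    intro k
    calc ∑ j ∈ univ.erase k, ‖A k j‖ = c * ∑ j ∈ univ.erase k, |δ k j| := by
          rw [mul_sum]
          refine sum_congr rfl fun j hj => ?_
          simp [A, (ne_of_mem_erase hj).symm, abs_of_pos hc]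
      _ ≤ c * S := by
          gcongr
          exact (sum_le_sum_of_subset_of_nonneg (erase_subset k univ) fun _ _ _ => abs_nonneg _).trans
            (single_le_sum (fun i _ => sum_nonneg fun j _ => abs_nonneg (δ i j)) (mem_univ k))
      _ ≤ 1 := by rw [inv_mul_le_one₀ (by positivity)]; linarith
      _ = RCLike.re (A k k) := by simp [A]
  obtain ⟨φ, hφ⟩ := (hA.posSemidef_of_sum_row_le_diag hdom).exists_gram_eq
  refine ⟨c, hc, φ, fun x y hxy => ?_⟩
  rw [norm_sub_sq_eq_gram, hφ]
  simp [A, hxy]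
  ring

theorem stmt_1_general (n : ℕ) (δ : Fin n → Fin n → ℝ)
    (hzero : ∀ x, δ x x = 0)
    (hsymm : ∀ x y, δ x y = δ y x)
    (hpos : ∀ x y, x ≠ y → 0 < δ x y) :
    ∃ φ : Fin n → EuclideanSpace ℝ (Fin n),
      ∀ x y w z : Fin n, δ x y < δ w z ↔ ‖φ x - φ y‖ < ‖φ w - φ z‖ := by
  obtain ⟨c, hc, φ, hφ⟩ := exists_sq_norm_sub_eq_two_add δ hsymm
  set g : ℝ → ℝ := fun t => if t = 0 then 0 else 2 + 2 * c * t
  have hg : StrictMonoOn g (Set.Ici 0) := by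
    intro s hs t _ hst
    have ht0 : 0 < t := lt_of_le_of_lt hs hst
    by_cases hs0 : s = 0
    · simp only [g, hs0, ht0.ne', if_true, if_false]; nlinarith
    · simp only [g, hs0, ht0.ne', if_false]; gcongr
  have hδ : ∀ x y, 0 ≤ δ x y := fun x y => by
    rcases eq_or_ne x y with rfl | hxy
    exacts [(hzero x).ge, (hpos x y hxy).le]
  have hφg : ∀ x y, ‖φ x - φ y‖ ^ 2 = g (δ x y) := fun x y => by
    rcases eq_or_ne x y with rfl | hxy
    · simp [g, hzero]
    · simp [g, (hpos x y hxy).ne', hφ x y hxy]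
  refine ⟨φ, fun x y w z => ?_⟩
  rw [← hg.lt_iff_lt (hδ x y) (hδ w z), ← hφg, ← hφg, sq_lt_sq₀ (norm_nonneg _) (norm_nonneg _)]

/-- Every metric on `n` points with all pairwise distances distinct admits a
monotone embedding into `n`-dimensional Euclidean space. -/
theorem stmt_1 (n : ℕ) (δ : Fin n → Fin n → ℝ)
    (hzero : ∀ x, δ x x = 0)
    (hsymm : ∀ x y, δ x y = δ y x)
    (hpos : ∀ x y, x ≠ y → 0 < δ x y)
    (htri : ∀ x y z, δ x z ≤ δ x y + δ y z)
    (hdist : ∀ x y w z : Fin n, x ≠ y → w ≠ z → s(x, y) ≠ s(w, z) → δ x y ≠ δ w z) :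
    ∃ φ : Fin n → EuclideanSpace ℝ (Fin n),
      ∀ x y w z : Fin n, δ x y < δ w z ↔ ‖φ x - φ y‖ < ‖φ w - φ z‖ :=
  stmt_1_general n δ hzero hsymm hpos
end

section
/- There is no map φ from {0,1,…,5ⁿ} into an n-dimensional normed space (ℝⁿ, ‖·‖) such that ‖φ(0) − φ(i)‖ < ‖φ(j) − φ(k)‖ for all i ≥ 1 and all distinct j,k ≥ 1. Consequently, monotone embedding of some (5ⁿ+1)-point metric space into any n-dimensional normed space is impossible, giving an Ω(log n) lower bound on the dimension. -/
open Metric MeasureTheory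
open scoped ENNReal

/-- No map of `5ⁿ + 1` points into an `n`-dimensional normed space can make
all distances from the point `0` strictly smaller than all distances among
the remaining `5ⁿ` points. -/
theorem stmt_7 (n : ℕ) (hn : 1 ≤ n) (E : Type*) [NormedAddCommGroup E]
    [NormedSpace ℝ E] [FiniteDimensional ℝ E] (hdim : Module.finrank ℝ E = n) :
    ¬ ∃ φ : Fin (5 ^ n + 1) → E,
      ∀ i j k : Fin (5 ^ n + 1), i ≠ 0 → j ≠ 0 → k ≠ 0 → j ≠ k →
        ‖φ 0 - φ i‖ < ‖φ j - φ k‖ := by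
  rintro ⟨φ, hφ⟩
  have h5 : (5:ℕ) ≤ 5 ^ n := by
    calc (5:ℕ) = 5 ^ 1 := by norm_num
    _ ≤ 5 ^ n := Nat.pow_le_pow_right (by norm_num) hn
  -- the nonzero indices
  set T : Finset (Fin (5 ^ n + 1)) := Finset.univ.erase 0 with hT
  have hTmem : ∀ i, i ∈ T ↔ i ≠ 0 := by
    intro i; simp [hT]
  have h1v : ((1 : Fin (5 ^ n + 1)) : ℕ) = 1 := by
    simp [Fin.val_one, Nat.mod_eq_of_lt (by omega : 1 < 5 ^ n + 1)]
  have h2v : ((2 : Fin (5 ^ n + 1)) : ℕ) = 2 := by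
    have : ((2 : Fin (5 ^ n + 1)) : ℕ) = 2 % (5 ^ n + 1) := rfl
    rw [this, Nat.mod_eq_of_lt (by omega)]
  have h1ne : (1 : Fin (5 ^ n + 1)) ≠ 0 := by
    intro h; have := congrArg Fin.val h; rw [h1v] at this; simp at this
  have h2ne : (2 : Fin (5 ^ n + 1)) ≠ 0 := by
    intro h; have := congrArg Fin.val h; rw [h2v] at this; simp at this
  have h12 : (1 : Fin (5 ^ n + 1)) ≠ 2 := by
    intro h; have := congrArg Fin.val h; rw [h1v, h2v] at this; simp at this
  have hTne : T.Nonempty := ⟨1, (hTmem 1).2 h1ne⟩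
  -- r : max distance from φ 0
  set r : ℝ := T.sup' hTne (fun i => ‖φ 0 - φ i‖) with hr
  have hr_le : ∀ i ∈ T, ‖φ 0 - φ i‖ ≤ r := fun i hi => by rw [hr]; exact Finset.le_sup' (fun i => ‖φ 0 - φ i‖) hi
  have hpair : ∀ j ∈ T, ∀ k ∈ T, j ≠ k → r < ‖φ j - φ k‖ := by
    intro j hj k hk hjk
    obtain ⟨i0, hi0, hEq⟩ := Finset.exists_mem_eq_sup' hTne (fun i => ‖φ 0 - φ i‖)
    rw [hr, hEq]
    exact hφ i0 j k ((hTmem i0).1 hi0) ((hTmem j).1 hj) ((hTmem k).1 hk) hjk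
  have hr_pos : 0 < r := by
    have h12' := hpair 1 ((hTmem 1).2 h1ne) 2 ((hTmem 2).2 h2ne) h12
    have htri : ‖φ 1 - φ 2‖ ≤ ‖φ 0 - φ 1‖ + ‖φ 0 - φ 2‖ := by
      have := norm_sub_le (φ 1 - φ 0) (φ 2 - φ 0)
      simp only [sub_sub_sub_cancel_right] at this
      calc ‖φ 1 - φ 2‖ ≤ ‖φ 1 - φ 0‖ + ‖φ 2 - φ 0‖ := this
      _ = ‖φ 0 - φ 1‖ + ‖φ 0 - φ 2‖ := by rw [norm_sub_rev (φ 1), norm_sub_rev (φ 2)]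
    have hle : ‖φ 1 - φ 2‖ ≤ r + r :=
      htri.trans (add_le_add (hr_le 1 ((hTmem 1).2 h1ne)) (hr_le 2 ((hTmem 2).2 h2ne)))
    nlinarith
  -- measure setup
  letI : MeasurableSpace E := borel E
  haveI : BorelSpace E := ⟨rfl⟩
  set μ : Measure E := Measure.addHaar with hμ
  set c : ℝ≥0∞ := μ (ball (0:E) 1) with hc
  have hc0 : c ≠ 0 := (measure_ball_pos μ 0 one_pos).ne'
  have hctop : c ≠ ⊤ := measure_ball_lt_top.ne
  -- disjoint balls
  have hdisj : (T : Set (Fin (5 ^ n + 1))).PairwiseDisjoint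
      (fun j => ball (φ j) (r / 2)) := by
    intro j hj k hk hjk
    simp only [Function.onFun, Set.disjoint_left]
    intro x hxj hxk
    simp only [mem_ball] at hxj hxk
    have : ‖φ j - φ k‖ ≤ dist x (φ j) + dist x (φ k) := by
      rw [dist_eq_norm, dist_eq_norm]
      calc ‖φ j - φ k‖ = ‖(x - φ k) - (x - φ j)‖ := by congr 1; abel
      _ ≤ ‖x - φ k‖ + ‖x - φ j‖ := norm_sub_le _ _
      _ = ‖x - φ j‖ + ‖x - φ k‖ := by ring
    have := hpair j hj k hk hjk
    linarith
  -- union contained in big ball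
  have hsub : (⋃ j ∈ T, ball (φ j) (r / 2)) ⊆ ball (φ 0) (3 * r / 2) := by
    intro x hx
    simp only [Set.mem_iUnion, mem_ball] at hx ⊢
    obtain ⟨j, hj, hxj⟩ := hx
    have : dist x (φ 0) ≤ dist x (φ j) + dist (φ j) (φ 0) := dist_triangle _ _ _
    have h1 : dist (φ j) (φ 0) ≤ r := by
      rw [dist_comm, dist_eq_norm]; exact hr_le j hj
    linarith
  haveI : Nontrivial E := by
    apply Module.nontrivial_of_finrank_pos (R := ℝ)
    rw [hdim]; omega
  -- measure computation
  have hball : ∀ j : Fin (5 ^ n + 1),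
      μ (ball (φ j) (r / 2)) = ENNReal.ofReal ((r / 2) ^ n) * c := by
    intro j
    rw [hμ, Measure.addHaar_ball _ _ (by linarith : (0:ℝ) ≤ r / 2), hdim]
  have hbig : μ (ball (φ 0) (3 * r / 2)) = ENNReal.ofReal ((3 * r / 2) ^ n) * c := by
    rw [hμ, Measure.addHaar_ball _ _ (by linarith : (0:ℝ) ≤ 3 * r / 2), hdim]
  have hcard : T.card = 5 ^ n := by
    rw [hT, Finset.card_erase_of_mem (Finset.mem_univ _), Finset.card_univ,
      Fintype.card_fin]
    omega
  have hkey : (5 ^ n : ℝ≥0∞) * (ENNReal.ofReal ((r / 2) ^ n) * c)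
      ≤ ENNReal.ofReal ((3 * r / 2) ^ n) * c := by
    calc (5 ^ n : ℝ≥0∞) * (ENNReal.ofReal ((r / 2) ^ n) * c)
        = ∑ j ∈ T, μ (ball (φ j) (r / 2)) := by
          rw [Finset.sum_congr rfl (fun j _ => hball j), Finset.sum_const, hcard,
            nsmul_eq_mul]
          push_cast
          ring
      _ = μ (⋃ j ∈ T, ball (φ j) (r / 2)) :=
          (measure_biUnion_finset hdisj (fun j _ => measurableSet_ball)).symm
      _ ≤ μ (ball (φ 0) (3 * r / 2)) := measure_mono hsub
      _ = ENNReal.ofReal ((3 * r / 2) ^ n) * c := hbig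
  rw [← mul_assoc, ENNReal.mul_le_mul_iff_left hc0 hctop] at hkey
  have h5e : (5 ^ n : ℝ≥0∞) = ENNReal.ofReal ((5:ℝ) ^ n) := by
    rw [ENNReal.ofReal_pow (by norm_num)]
    norm_num
  rw [h5e, ← ENNReal.ofReal_mul (by positivity)] at hkey
  rw [ENNReal.ofReal_le_ofReal_iff (by positivity)] at hkey
  have hlt : (3 * r / 2) ^ n < (5:ℝ) ^ n * (r / 2) ^ n := by
    rw [← mul_pow]
    apply pow_lt_pow_left₀ _ (by linarith) (by omega)
    linarith
  linarith
end

section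
/- Let v₁,…,vₙ ∈ ℝᵈ. Then d ≥ n²/(n + Σ_{i≠j}(1 − ‖vᵢ − vⱼ‖²)²) − 3. -/
/-!
The matrix `A = (1 - ‖vᵢ - vⱼ‖²)ᵢⱼ` has ones on the diagonal, and expanding
`‖vᵢ - vⱼ‖² = ‖vᵢ‖² - 2⟪vᵢ, vⱼ⟫ + ‖vⱼ‖²` writes it as two rank-one matrices plus twice a Gram
matrix of rank at most `d`. For a symmetric matrix, Cauchy–Schwarz on its nonzero eigenvalues gives
`(tr A)² ≤ rank A · tr (A²)`; here `tr A = n` and `tr (A²)` is the sum of the squared entries,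
so `n² ≤ (d + 2) (n + Σ_{i≠j} (1 - ‖vᵢ - vⱼ‖²)²)`.
-/

open Matrix Finset

namespace Matrix

variable {ι : Type*} [Fintype ι]

theorem rank_add_le {m K : Type*} [Field K] (A B : Matrix m ι K) :
    (A + B).rank ≤ A.rank + B.rank := by
  rw [rank, rank, rank, mulVecLin_add]
  exact (Submodule.finrank_mono (LinearMap.range_add_le _ _)).trans
    (Submodule.finrank_add_le_finrank_add_finrank _ _)

theorem IsHermitian.trace_sq_le_rank_mul_trace_mul_self [DecidableEq ι] {A : Matrix ι ι ℝ}
    (hA : A.IsHermitian) : A.trace ^ 2 ≤ A.rank * (A * A).trace := by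
  set μ := hA.eigenvalues
  set s := univ.filter fun i => μ i ≠ 0
  have htrace : A.trace = ∑ i ∈ s, μ i := by
    rw [sum_filter_ne_zero]
    simpa using hA.trace_eq_sum_eigenvalues
  have htrace_mul_self : (A * A).trace = ∑ i ∈ s, μ i ^ 2 := by
    rw [sum_filter_of_ne fun i _ hi => by simpa using hi]
    conv_lhs => rw [hA.spectral_theorem, ← map_mul, Unitary.conjStarAlgAut_apply, trace_mul_cycle,
      Unitary.coe_star_mul_self, one_mul, diagonal_mul_diagonal, trace_diagonal]
    simp [sq, μ]
  have hrank : (A.rank : ℝ) = #s := by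
    rw [hA.rank_eq_card_non_zero_eigs, Fintype.card_subtype]
  rw [htrace, htrace_mul_self, hrank]
  exact sq_sum_le_card_mul_sum_sq

end Matrix

section

variable {ι E : Type*} [NormedAddCommGroup E]

def oneSubSqDistMatrix (v : ι → E) : Matrix ι ι ℝ :=
  of fun i j => 1 - ‖v i - v j‖ ^ 2

variable (v : ι → E)

theorem oneSubSqDistMatrix_isHermitian : (oneSubSqDistMatrix v).IsHermitian := by
  ext i j
  simp [oneSubSqDistMatrix, norm_sub_rev]

theorem oneSubSqDistMatrix_eq [InnerProductSpace ℝ E] :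
    oneSubSqDistMatrix v = vecMulVec 1 (fun j => 1 - ‖v j‖ ^ 2) +
      vecMulVec (fun i => -‖v i‖ ^ 2) 1 + (2 : ℝ) • gram ℝ v := by
  ext i j
  simp only [oneSubSqDistMatrix, of_apply, Matrix.add_apply, vecMulVec_apply, Matrix.smul_apply,
    gram_apply, norm_sub_sq_real, Pi.one_apply, smul_eq_mul]
  ring

variable [Fintype ι]

theorem trace_oneSubSqDistMatrix : (oneSubSqDistMatrix v).trace = Fintype.card ι := by
  simp [trace, oneSubSqDistMatrix]

theorem trace_oneSubSqDistMatrix_mul_self [DecidableEq ι] :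
    (oneSubSqDistMatrix v * oneSubSqDistMatrix v).trace =
      Fintype.card ι + ∑ p ∈ univ.offDiag, (1 - ‖v p.1 - v p.2‖ ^ 2) ^ 2 := by
  calc (oneSubSqDistMatrix v * oneSubSqDistMatrix v).trace
      = ∑ p ∈ univ ×ˢ univ, (1 - ‖v p.1 - v p.2‖ ^ 2) ^ 2 := by
        rw [sum_product' univ univ fun i j => (1 - ‖v i - v j‖ ^ 2) ^ 2]
        simp only [trace, Matrix.diag, mul_apply, oneSubSqDistMatrix, of_apply]
        refine sum_congr rfl fun i _ => sum_congr rfl fun j _ => ?_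
        rw [norm_sub_rev (v j), ← sq]
    _ = Fintype.card ι + ∑ p ∈ univ.offDiag, (1 - ‖v p.1 - v p.2‖ ^ 2) ^ 2 := by
        rw [← diag_union_offDiag, sum_union (disjoint_diag_offDiag _), sum_diag]
        simp

theorem rank_oneSubSqDistMatrix_le [InnerProductSpace ℝ E] [FiniteDimensional ℝ E] :
    (oneSubSqDistMatrix v).rank ≤ Module.finrank ℝ E + 2 := by
  have hgram : ((2 : ℝ) • gram ℝ v).rank ≤ Module.finrank ℝ E := by
    rw [gram_eq_conjTranspose_mul (stdOrthonormalBasis ℝ E), ← smul_mul]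
    exact (rank_mul_le_left _ _).trans ((rank_le_card_width _).trans_eq (Fintype.card_fin _))
  rw [oneSubSqDistMatrix_eq]
  calc _ ≤ _ + _ := rank_add_le _ _
    _ ≤ (1 + 1) + Module.finrank ℝ E := by
      gcongr
      exact (rank_add_le _ _).trans (add_le_add (rank_vecMulVec_le _ _) (rank_vecMulVec_le _ _))
    _ = _ := by ring

end

/-- For any vectors `v₁, …, vₙ ∈ ℝᵈ`,
`d ≥ n² / (n + Σ_{i ≠ j} (1 - ‖vᵢ - vⱼ‖²)²) - 3`. -/
theorem stmt_10 (n d : ℕ) (v : Fin n → EuclideanSpace ℝ (Fin d)) :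
    (n : ℝ) ^ 2 /
        ((n : ℝ) + ∑ p ∈ Finset.univ.offDiag, (1 - ‖v p.1 - v p.2‖ ^ 2) ^ 2) - 3
      ≤ (d : ℝ) := by
  have hrank : ((oneSubSqDistMatrix v).rank : ℝ) ≤ d + 2 := by
    exact_mod_cast (rank_oneSubSqDistMatrix_le v).trans_eq (by simp)
  have hCS := (oneSubSqDistMatrix_isHermitian v).trace_sq_le_rank_mul_trace_mul_self
  rw [trace_oneSubSqDistMatrix, trace_oneSubSqDistMatrix_mul_self, Fintype.card_fin] at hCS
  have hden : 0 ≤ (n : ℝ) + ∑ p ∈ univ.offDiag, (1 - ‖v p.1 - v p.2‖ ^ 2) ^ 2 := by positivity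
  have hbound : (n : ℝ) ^ 2 / ((n : ℝ) + ∑ p ∈ univ.offDiag, (1 - ‖v p.1 - v p.2‖ ^ 2) ^ 2) ≤
      d + 2 :=
    div_le_of_le_mul₀ hden (by positivity) (hCS.trans (by gcongr))
  linarith
end

section
/- Let G be a d-regular graph on n vertices with adjacency matrix M and second largest eigenvalue λ₂ satisfying λ₂ ≥ d − n/2 and λ₂ < d. Set α = n/(d − λ₂) and A = (αd − n)I + J − αM. Then A is positive semidefinite, A_{ij} ≤ −1 for every edge (i,j), A_{ij} ≥ 1 for every non-edge pair i ≠ j, all row sums of A are zero, and (1/2)tr A = (n²/2)·λ₂/(d−λ₂) + n/2. -/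
/-!
Since `α d - n = α λ₂`, the matrix is `A = α λ₂ I + J - α M`. Regularity gives `M 1 = d 1`, so the
row sums of `A` are `α λ₂ + n - α d = 0`: the symmetric matrix `A` kills the constant vectors, and
its quadratic form is unchanged by adding a constant vector. It is therefore enough to check
positivity on vectors `x` with zero sum, where `J x = 0` and `x ⬝ A x = α (λ₂ |x|² - x ⬝ M x) ≥ 0`.
On an edge `A i j = 1 - α`, and `d - λ₂ ≤ n / 2` is exactly `α ≥ 2`.
-/

open Matrix

namespace Matrix

variable {ι : Type*} [Fintype ι]

theorem dotProduct_mulVec_add_const_of_mulVec_one_eq_zero {A : Matrix ι ι ℝ} (hA : A.IsSymm)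
    (h1 : A *ᵥ 1 = 0) (x : ι → ℝ) (c : ℝ) :
    (x + c • 1) ⬝ᵥ (A *ᵥ (x + c • 1)) = x ⬝ᵥ (A *ᵥ x) := by
  have h1' : (1 : ι → ℝ) ᵥ* A = 0 := by rw [← mulVec_transpose, hA.eq, h1]
  rw [mulVec_add, mulVec_smul, h1, smul_zero, add_zero, add_dotProduct, smul_dotProduct,
    dotProduct_mulVec 1, h1', zero_dotProduct, smul_zero, add_zero]

theorem posSemidef_of_mulVec_one_eq_zero {A : Matrix ι ι ℝ} (hA : A.IsSymm) (h1 : A *ᵥ 1 = 0)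
    (h : ∀ x : ι → ℝ, ∑ i, x i = 0 → 0 ≤ x ⬝ᵥ (A *ᵥ x)) : A.PosSemidef := by
  refine .of_dotProduct_mulVec_nonneg hA fun x => ?_
  rw [star_trivial]
  rcases isEmpty_or_nonempty ι with _ | _
  · simp [dotProduct]
  have hcard : (Fintype.card ι : ℝ) ≠ 0 := Nat.cast_ne_zero.2 Fintype.card_ne_zero
  set c := (∑ i, x i) / Fintype.card ι with hc
  have hx : x = (x - c • 1) + c • 1 := by abel
  rw [hx, dotProduct_mulVec_add_const_of_mulVec_one_eq_zero hA h1]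
  refine h _ ?_
  simp only [Pi.sub_apply, Pi.smul_apply, Pi.one_apply, smul_eq_mul, mul_one,
    Finset.sum_sub_distrib, Finset.sum_const, Finset.card_univ, nsmul_eq_mul]
  rw [hc, mul_div_cancel₀ _ hcard, sub_self]

end Matrix

namespace SimpleGraph

variable {V : Type*} [DecidableEq V] (G : SimpleGraph V) [DecidableRel G.Adj]

def dualMatrix (a α : ℝ) : Matrix V V ℝ :=
  a • 1 + of (fun _ _ => 1) - α • G.adjMatrix ℝ

variable {G} {a α : ℝ}

theorem dualMatrix_apply_self (i : V) : G.dualMatrix a α i i = a + 1 := by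
  simp [dualMatrix]

theorem dualMatrix_apply_of_adj {i j : V} (h : G.Adj i j) : G.dualMatrix a α i j = 1 - α := by
  simp [dualMatrix, G.ne_of_adj h, h]

theorem dualMatrix_apply_of_ne_of_not_adj {i j : V} (hne : i ≠ j) (h : ¬G.Adj i j) :
    G.dualMatrix a α i j = 1 := by
  simp [dualMatrix, hne, h]

theorem isSymm_dualMatrix : (G.dualMatrix a α).IsSymm := by
  ext i j
  simp [dualMatrix, one_apply, eq_comm, G.adj_comm]

variable [Fintype V]

theorem trace_dualMatrix : (G.dualMatrix a α).trace = Fintype.card V * (a + 1) := by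
  simp only [trace, diag, dualMatrix_apply_self, Finset.sum_const, Finset.card_univ, nsmul_eq_mul]

theorem sum_dualMatrix_apply {d : ℕ} (hreg : G.IsRegularOfDegree d) (i : V) :
    ∑ j, G.dualMatrix a α i j = a + Fintype.card V - α * d := by
  have hdeg : ∑ j, G.adjMatrix ℝ i j = d := by
    simpa [mulVec, dotProduct] using G.adjMatrix_mulVec_const_apply_of_regular (a := (1 : ℝ)) hreg
  simp only [dualMatrix, Matrix.sub_apply, Matrix.add_apply, Matrix.smul_apply, of_apply,
    Finset.sum_sub_distrib, Finset.sum_add_distrib, ← Finset.smul_sum, hdeg]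
  simp [one_apply]

theorem dotProduct_dualMatrix_mulVec_of_sum_eq_zero {x : V → ℝ} (hx : ∑ i, x i = 0) :
    x ⬝ᵥ (G.dualMatrix a α *ᵥ x) = a * (x ⬝ᵥ x) - α * (x ⬝ᵥ (G.adjMatrix ℝ *ᵥ x)) := by
  have hJ : (of fun _ _ => (1 : ℝ) : Matrix V V ℝ) *ᵥ x = 0 := by
    ext; simp [mulVec, dotProduct, hx]
  simp [dualMatrix, sub_mulVec, add_mulVec, smul_mulVec, hJ]

theorem posSemidef_dualMatrix {d : ℕ} {lam : ℝ} (hreg : G.IsRegularOfDegree d)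
    (hlam : ∀ x : V → ℝ, ∑ i, x i = 0 → x ⬝ᵥ (G.adjMatrix ℝ *ᵥ x) ≤ lam * (x ⬝ᵥ x))
    (hα : 0 ≤ α) (hgap : α * (d - lam) = Fintype.card V) :
    (G.dualMatrix (α * lam) α).PosSemidef := by
  refine posSemidef_of_mulVec_one_eq_zero isSymm_dualMatrix ?_ fun x hx => ?_
  · ext i
    simp only [mulVec, dotProduct, Pi.one_apply, mul_one, Pi.zero_apply]
    rw [sum_dualMatrix_apply hreg]
    linarith
  · rw [dotProduct_dualMatrix_mulVec_of_sum_eq_zero hx, mul_assoc, ← mul_sub]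
    exact mul_nonneg hα (sub_nonneg.2 (hlam x hx))

end SimpleGraph

/-- For a `d`-regular graph `G` on `n` vertices with second largest adjacency
eigenvalue `λ₂` satisfying `d - n/2 ≤ λ₂ < d`, the matrix
`A = (αd - n)·I + J - α·M` with `α = n/(d - λ₂)` is a feasible dual solution:
it is PSD, `Aᵢⱼ ≤ -1` on edges, `Aᵢⱼ ≥ 1` on non-edge pairs, has zero row
sums, and `(1/2) tr A = (n²/2)·λ₂/(d - λ₂) + n/2`. -/
theorem stmt_11 (n d : ℕ) (G : SimpleGraph (Fin n)) [DecidableRel G.Adj]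
    (hreg : G.IsRegularOfDegree d)
    (lam2 : ℝ)
    (hlam : ∀ x : Fin n → ℝ, (∑ i, x i) = 0 →
      x ⬝ᵥ (G.adjMatrix ℝ *ᵥ x) ≤ lam2 * (x ⬝ᵥ x))
    (hlow : (d : ℝ) - n / 2 ≤ lam2) (hup : lam2 < d)
    (α : ℝ) (hα : α = n / (d - lam2))
    (A : Matrix (Fin n) (Fin n) ℝ)
    (hAdef : A = (α * d - n) • (1 : Matrix (Fin n) (Fin n) ℝ) +
      (Matrix.of fun _ _ => (1 : ℝ)) - α • G.adjMatrix ℝ) :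
    A.PosSemidef ∧
    (∀ i j, G.Adj i j → A i j ≤ -1) ∧
    (∀ i j, i ≠ j → ¬ G.Adj i j → 1 ≤ A i j) ∧
    (∀ i, ∑ j, A i j = 0) ∧
    A.trace / 2 = ((n : ℝ) ^ 2 / 2) * (lam2 / ((d : ℝ) - lam2)) + (n : ℝ) / 2 := by
  have hgap_pos : 0 < (d : ℝ) - lam2 := sub_pos.2 hup
  have hgap : α * (d - lam2) = n := by rw [hα]; field_simp
  obtain rfl : A = G.dualMatrix (α * lam2) α := by
    rw [hAdef, SimpleGraph.dualMatrix, show α * d - n = α * lam2 by linarith]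
  have htwo : 2 ≤ α := by rw [hα, le_div_iff₀ hgap_pos]; linarith
  refine ⟨G.posSemidef_dualMatrix hreg hlam (by linarith) (by simpa using hgap),
    fun i j hij => ?_, fun i j hne hij => ?_, fun i => ?_, ?_⟩
  · rw [SimpleGraph.dualMatrix_apply_of_adj hij]; linarith
  · rw [SimpleGraph.dualMatrix_apply_of_ne_of_not_adj hne hij]
  · rw [SimpleGraph.sum_dualMatrix_apply hreg, Fintype.card_fin]; linarith
  · rw [SimpleGraph.trace_dualMatrix, Fintype.card_fin, hα]
    field_simp
end

section
/- Let G be the Cayley graph of ℤ₂ᵏ (k odd) with connection set {g : 1 ≤ |g| ≤ (k−1)/2} (Hamming weight at most (k−1)/2, excluding 0). For y ∈ ℤ₂ᵏ, y ≠ 0, the eigenvalue corresponding to the character x ↦ (−1)^{⟨x,y⟩} equals Σ_{s=0}^{(k−1)/2} K_s^{(k)}(|y|), where K_s^{(k)} is the Krawtchouk polynomial, and its absolute value is at most C(k−1, (k−1)/2) = o(2^{k−1}). -/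
/-- The Krawtchouk polynomial `K_s^{(k)}(i) = Σⱼ (-1)ʲ C(i,j) C(k-i, s-j)`. -/
def krawtchouk (k s i : ℕ) : ℤ :=
  ∑ j ∈ Finset.range (s + 1), (-1 : ℤ) ^ j * (i.choose j) * ((k - i).choose (s - j))

/-- Hamming weight of an element of `ℤ₂ᵏ`. -/
def hammingWt {k : ℕ} (g : Fin k → ZMod 2) : ℕ :=
  (Finset.univ.filter fun i => g i ≠ 0).card

/-- The value at `g` of the character of `ℤ₂ᵏ` indexed by `y`,
namely `(-1)^⟨y, g⟩`. -/
def charSign {k : ℕ} (y g : Fin k → ZMod 2) : ℤ :=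
  if (∑ i, y i * g i : ZMod 2) = 0 then 1 else -1

open Polynomial Finset

lemma zmod2_cases : ∀ x : ZMod 2, x = 0 ∨ x = 1 := by decide

lemma mySignSum {ι : Type*} (s : Finset ι) (f : ι → ZMod 2) :
    (if (∑ i ∈ s, f i) = 0 then (1 : ℤ) else -1) =
      ∏ i ∈ s, (if f i = 0 then (1 : ℤ) else -1) := by
  classical
  induction s using Finset.induction with
  | empty => simp
  | @insert a s ha ih =>
    rw [Finset.sum_insert ha, Finset.prod_insert ha, ← ih]
    rcases zmod2_cases (f a) with h | h
    · simp [h]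
    · rcases zmod2_cases (∑ i ∈ s, f i) with h2 | h2
      · rw [h, h2, add_zero]; norm_num
      · rw [h, h2, show (1 : ZMod 2) + 1 = 0 from by decide]; norm_num

lemma coeff_one_sub_X_pow (b m : ℕ) :
    (((1 - X) ^ b : Polynomial ℤ)).coeff m = (-1 : ℤ) ^ m * b.choose m := by
  have h1 : (1 - X : Polynomial ℤ) = -(X + C (-1)) := by
    rw [map_neg, map_one]; ring
  have h2 : ((-1 : Polynomial ℤ)) ^ b = C ((-1 : ℤ) ^ b) := by simp
  rw [h1, neg_pow, h2, Polynomial.coeff_C_mul, coeff_X_add_C_pow]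
  rcases le_or_gt m b with h | h
  · rw [← mul_assoc, ← pow_add, show b + (b - m) = 2 * (b - m) + m from by omega,
      pow_add, pow_mul]
    norm_num
  · rw [Nat.choose_eq_zero_of_lt h]
    simp

/-- Coefficient of `(1+X)^a * (1-X)^b`. -/
lemma coeff_prod_pow (a b s : ℕ) :
    (((1 + X) ^ a * (1 - X) ^ b : Polynomial ℤ)).coeff s =
      ∑ j ∈ Finset.range (s + 1), (-1 : ℤ) ^ j * (b.choose j) * (a.choose (s - j)) := by
  rw [mul_comm, Polynomial.coeff_mul, Finset.Nat.sum_antidiagonal_eq_sum_range_succ_mk]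
  refine Finset.sum_congr rfl fun j hj => ?_
  rw [coeff_one_sub_X_pow, Polynomial.coeff_one_add_X_pow]

/-- The generating function of `charSign` by weight. -/
lemma genfun {k : ℕ} (y : Fin k → ZMod 2) :
    (∑ g : Fin k → ZMod 2, C (charSign y g) * X ^ (hammingWt g)) =
      ((1 + X) ^ (k - hammingWt y) * (1 - X) ^ (hammingWt y) : Polynomial ℤ) := by
  classical
  have key : ∀ g : Fin k → ZMod 2, C (charSign y g) * X ^ (hammingWt g) =
      ∏ t, ((if y t * g t = 0 then (C (1:ℤ)) else C (-1)) * (if g t = 0 then 1 else X)) := by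
    intro g
    rw [Finset.prod_mul_distrib]
    congr 1
    · rw [charSign, mySignSum Finset.univ (fun i => y i * g i), map_prod]
      refine Finset.prod_congr rfl fun t _ => ?_
      split <;> simp
    · rw [hammingWt, ← Finset.prod_const (b := (X : Polynomial ℤ)), Finset.prod_filter]
      refine Finset.prod_congr rfl fun t _ => ?_
      by_cases h : g t = 0 <;> simp [h]
  simp only [key]
  rw [← Fintype.prod_sum (fun t (b : ZMod 2) =>
      ((if y t * b = 0 then (C (1:ℤ)) else C (-1)) * (if b = 0 then 1 else X)))]
  have sum2 : ∀ F : ZMod 2 → Polynomial ℤ, (∑ b : ZMod 2, F b) = F 0 + F 1 := fun F =>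
    Fin.sum_univ_two F
  have step : ∀ t, (∑ b : ZMod 2,
      ((if y t * b = 0 then (C (1:ℤ)) else C (-1)) * (if b = 0 then 1 else X))) =
      if y t ≠ 0 then (1 - X) else (1 + X) := by
    intro t
    rw [sum2]
    rcases zmod2_cases (y t) with h | h <;>
      simp [h, sub_eq_add_neg]
  have hcard : (Finset.univ.filter fun t : Fin k => ¬ y t ≠ 0).card = k - hammingWt y := by
    have h := Finset.card_filter_add_card_filter_not
      (s := (Finset.univ : Finset (Fin k))) (p := fun t => y t ≠ 0)
    simp only [Finset.card_univ, Fintype.card_fin] at h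
    rw [hammingWt]
    omega
  calc (∏ t, ∑ b : ZMod 2,
        ((if y t * b = 0 then (C (1:ℤ)) else C (-1)) * (if b = 0 then 1 else X)))
      = ∏ t, (if y t ≠ 0 then (1 - X : Polynomial ℤ) else (1 + X)) :=
        Finset.prod_congr rfl fun t _ => step t
    _ = (1 - X) ^ (hammingWt y) * (1 + X) ^ (k - hammingWt y) := by
        rw [Finset.prod_ite, Finset.prod_const, Finset.prod_const, hcard, hammingWt]
    _ = _ := mul_comm _ _

/-- Telescoping. -/
lemma telescope (P : Polynomial ℤ) (n : ℕ) :
    (∑ s ∈ Finset.range (n + 1), ((1 - X) * P).coeff s) = P.coeff n := by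
  have h1 : ∀ s, ((1 - X) * P).coeff s = P.coeff s - (X * P).coeff s := by
    intro s; rw [sub_mul, one_mul, Polynomial.coeff_sub]
  simp only [h1]
  rw [Finset.sum_sub_distrib]
  have h2 : (∑ s ∈ Finset.range (n + 1), (X * P).coeff s)
      = ∑ s ∈ Finset.range n, P.coeff s := by
    rw [Finset.sum_range_succ']
    simp [Polynomial.coeff_X_mul]
  rw [h2, Finset.sum_range_succ]
  ring

lemma krawtchouk_eq_coeff (k s i : ℕ) :
    krawtchouk k s i = (((1 + X) ^ (k - i) * (1 - X) ^ i : Polynomial ℤ)).coeff s := by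
  rw [coeff_prod_pow, krawtchouk]

/-- For the Cayley graph of `ℤ₂ᵏ` (`k` odd) with connection set the Hamming
ball of radius `(k-1)/2`, the eigenvalue corresponding to the nonprincipal
character `x ↦ (-1)^⟨x,y⟩` equals `Σ_{s=0}^{(k-1)/2} K_s^{(k)}(|y|)`, and is
bounded in absolute value by `C(k-1, (k-1)/2)`. -/
theorem stmt_15 (k : ℕ) (hk : Odd k) (y : Fin k → ZMod 2) (hy : y ≠ 0) :
    (∑ g ∈ Finset.univ.filter (fun g : Fin k → ZMod 2 => hammingWt g ≤ (k - 1) / 2),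
        charSign y g) =
      ∑ s ∈ Finset.range ((k - 1) / 2 + 1), krawtchouk k s (hammingWt y) ∧
    |∑ s ∈ Finset.range ((k - 1) / 2 + 1), krawtchouk k s (hammingWt y)| ≤
      (k - 1).choose ((k - 1) / 2) := by
  classical
  set l := (k - 1) / 2 with hl
  set i := hammingWt y with hi
  have hi1 : 1 ≤ i := by
    rcases Function.ne_iff.mp hy with ⟨t, ht⟩
    have hmem : t ∈ Finset.univ.filter fun j => y j ≠ 0 := by
      simp only [Finset.mem_filter, Finset.mem_univ, true_and]
      exact ht
    have := Finset.card_pos.mpr ⟨t, hmem⟩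
    simp only [hi, hammingWt]
    omega
  have hik : i ≤ k := by
    have h := Finset.card_filter_le (Finset.univ : Finset (Fin k)) (fun j => y j ≠ 0)
    simpa [hammingWt, hi] using h
  -- coefficient extraction from the generating function
  have coeff_eq : ∀ s, (∑ g ∈ Finset.univ.filter
      (fun g : Fin k → ZMod 2 => hammingWt g = s), charSign y g) = krawtchouk k s i := by
    intro s
    have hcoeff := congrArg (fun p => Polynomial.coeff p s) (genfun y)
    simp only [Polynomial.finset_sum_coeff, Polynomial.coeff_C_mul,
      Polynomial.coeff_X_pow] at hcoeff
    rw [krawtchouk_eq_coeff, hi, ← hcoeff, Finset.sum_filter]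
    refine Finset.sum_congr rfl fun g _ => ?_
    by_cases h : hammingWt g = s
    · rw [if_pos h, if_pos h.symm, mul_one]
    · rw [if_neg h, if_neg (fun hh => h hh.symm), mul_zero]
  have part1 : (∑ g ∈ Finset.univ.filter
      (fun g : Fin k → ZMod 2 => hammingWt g ≤ l), charSign y g) =
      ∑ s ∈ Finset.range (l + 1), krawtchouk k s i := by
    rw [← Finset.sum_fiberwise_of_maps_to (g := hammingWt)
      (t := Finset.range (l + 1)) (fun g hg => by
        simp only [Finset.mem_filter, Finset.mem_univ, true_and] at hg
        simp only [Finset.mem_range]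
        omega)]
    refine Finset.sum_congr rfl fun s hs => ?_
    rw [← coeff_eq s]
    refine Finset.sum_congr ?_ fun _ _ => rfl
    ext g
    simp only [Finset.mem_filter, Finset.mem_univ, true_and, Finset.mem_range] at hs ⊢
    constructor
    · rintro ⟨_, h⟩; exact h
    · intro h; exact ⟨by omega, h⟩
  refine ⟨part1, ?_⟩
  -- part 2: the bound
  set P : Polynomial ℤ := (1 + X) ^ (k - i) * (1 - X) ^ (i - 1) with hP
  have hfactor : ((1 + X) ^ (k - i) * (1 - X) ^ i : Polynomial ℤ) = (1 - X) * P := by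
    have h2 : ((1 - X : Polynomial ℤ)) ^ i = (1 - X) ^ (i - 1) * (1 - X) := by
      rw [← pow_succ]
      congr 1
      omega
    rw [hP, h2]
    ring
  have hsum : (∑ s ∈ Finset.range (l + 1), krawtchouk k s i) = P.coeff l := by
    calc (∑ s ∈ Finset.range (l + 1), krawtchouk k s i)
        = ∑ s ∈ Finset.range (l + 1), ((1 - X) * P).coeff s := by
          refine Finset.sum_congr rfl fun s _ => ?_
          rw [krawtchouk_eq_coeff, hfactor]
      _ = P.coeff l := telescope P l
  rw [hsum]
  -- bound |P.coeff l|
  have hPc : P.coeff l = ∑ j ∈ Finset.range (l + 1),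
      (-1 : ℤ) ^ j * (((i - 1).choose j : ℤ)) * (((k - i).choose (l - j) : ℤ)) := by
    rw [hP, coeff_prod_pow]
  rw [hPc]
  calc |∑ j ∈ Finset.range (l + 1),
          (-1 : ℤ) ^ j * (((i - 1).choose j : ℤ)) * (((k - i).choose (l - j) : ℤ))|
      ≤ ∑ j ∈ Finset.range (l + 1),
          |(-1 : ℤ) ^ j * (((i - 1).choose j : ℤ)) * (((k - i).choose (l - j) : ℤ))| :=
        Finset.abs_sum_le_sum_abs _ _
    _ = ∑ j ∈ Finset.range (l + 1),
          (((i - 1).choose j : ℤ) * ((k - i).choose (l - j) : ℤ)) := by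
        refine Finset.sum_congr rfl fun j _ => ?_
        rw [abs_mul, abs_mul, abs_pow, abs_neg, abs_one, one_pow, one_mul,
          Nat.abs_cast, Nat.abs_cast]
    _ = (((i - 1) + (k - i)).choose l : ℤ) := by
        rw [Nat.add_choose_eq, Finset.Nat.sum_antidiagonal_eq_sum_range_succ_mk]
        push_cast
        rfl
    _ = ((k - 1).choose l : ℤ) := by
        congr 2
        omega
end

section
/- Let M be the adjacency matrix of a d-regular graph on n vertices with d ≤ n/2, let M̄ = J − M, and let N be the 2n×2n block matrix with diagonal blocks M and off-diagonal blocks M̄ and M̄ᵗ. Then N is the adjacency-like matrix of an n-regular structure on 2n vertices, and its spectrum is: n, 2d−n, and for each nontrivial eigenvalue λ of M, the pair 0 and 2λ. In particular the second largest eigenvalue of N equals 2λ₂(M) if λ₂(M) ≥ 0. -/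
open Matrix

/-- For the adjacency matrix `M` of a `d`-regular graph (`d ≤ n/2`),
`M̄ = J - M`, and the block matrix `N = [[M, M̄], [M̄ᵗ, M]]`: `N` has all row
sums `n` (an `n`-regular structure on `2n` vertices), the constant vector and
the `(1, -1)`-signed constant vector are eigenvectors with eigenvalues `n`
and `2d - n`, every nontrivial eigenvector `v` of `M` (eigenvalue `λ`) gives
eigenvectors `(v, v)` and `(v, -v)` of `N` with eigenvalues `0` and `2λ`, and
these doubled families stay linearly independent. -/
theorem stmt_17 (n d : ℕ) (hd : 2 * d ≤ n) (G : SimpleGraph (Fin n))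
    [DecidableRel G.Adj] (hreg : G.IsRegularOfDegree d)
    (M Mbar : Matrix (Fin n) (Fin n) ℝ)
    (hM : M = G.adjMatrix ℝ)
    (hMbar : Mbar = (Matrix.of fun _ _ => (1 : ℝ)) - M)
    (N : Matrix (Fin n ⊕ Fin n) (Fin n ⊕ Fin n) ℝ)
    (hN : N = Matrix.fromBlocks M Mbar Mbarᵀ M) :
    (∀ i, ∑ j, N i j = n) ∧
    (N *ᵥ Sum.elim (fun _ => 1) (fun _ => 1) =
      (n : ℝ) • Sum.elim (fun _ => 1) (fun _ => 1)) ∧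
    (N *ᵥ Sum.elim (fun _ => 1) (fun _ => -1) =
      (2 * (d : ℝ) - n) • Sum.elim (fun _ => 1) (fun _ => -1)) ∧
    (∀ (lam : ℝ) (v : Fin n → ℝ), M *ᵥ v = lam • v → (∑ i, v i) = 0 →
      N *ᵥ Sum.elim v v = (0 : ℝ) • Sum.elim v v ∧
      N *ᵥ Sum.elim v (-v) = (2 * lam) • Sum.elim v (-v)) ∧
    (∀ v : Fin n → (Fin n → ℝ), LinearIndependent ℝ v →
      LinearIndependent ℝ (fun x : Fin n ⊕ Fin n =>
        Sum.elim (Sum.elim (v ·) (v ·) x) (Sum.elim (v ·) (-v ·) x))) := by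
  have hMT : Mᵀ = M := by rw [hM]; exact SimpleGraph.transpose_adjMatrix G
  have hbT : Mbarᵀ = Mbar := by
    rw [hMbar, Matrix.transpose_sub, hMT]
    congr 1
  have hrow : ∀ a, ∑ j, M a j = (d : ℝ) := by
    intro a
    rw [hM]
    simp only [SimpleGraph.adjMatrix_apply]
    rw [Finset.sum_boole]
    have : (Finset.filter (fun x => G.Adj a x) Finset.univ).card = d := by
      rw [← SimpleGraph.neighborFinset_eq_filter]
      exact hreg a
    rw [this]
  have hbrow : ∀ a, ∑ j, Mbar a j = (n : ℝ) - d := by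
    intro a
    rw [hMbar]
    simp [Matrix.sub_apply, Finset.sum_sub_distrib, hrow a]
  have hM1 : M *ᵥ (fun _ => (1 : ℝ)) = fun _ => (d : ℝ) := by
    funext a; simp [Matrix.mulVec, dotProduct, hrow a]
  have hMb1 : Mbar *ᵥ (fun _ => (1 : ℝ)) = fun _ => (n : ℝ) - d := by
    funext a; simp [Matrix.mulVec, dotProduct, hbrow a]
  have hMn1 : M *ᵥ (fun _ => (-1 : ℝ)) = fun _ => -(d : ℝ) := by
    funext a; simp [Matrix.mulVec, dotProduct, hrow a]
  have hMbn1 : Mbar *ᵥ (fun _ => (-1 : ℝ)) = fun _ => -((n : ℝ) - d) := by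
    funext a; simp [Matrix.mulVec, dotProduct, hbrow a]
  have hMbv : ∀ (lam : ℝ) (v : Fin n → ℝ), M *ᵥ v = lam • v → (∑ i, v i) = 0 →
      Mbar *ᵥ v = (-lam) • v := by
    intro lam v hv hs
    funext a
    rw [hMbar, Matrix.sub_mulVec, hv]
    simp [Matrix.mulVec, dotProduct, hs]
  have hNapp : ∀ p q : Fin n → ℝ, N *ᵥ Sum.elim p q =
      Sum.elim (M *ᵥ p + Mbar *ᵥ q) (Mbar *ᵥ p + M *ᵥ q) := by
    intro p q
    rw [hN, Matrix.fromBlocks_mulVec, hbT, Sum.elim_comp_inl, Sum.elim_comp_inr]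
  refine ⟨?_, ?_, ?_, ?_, ?_⟩
  · intro i
    rw [hN]
    cases i with
    | inl a =>
      rw [Fintype.sum_sum_type]
      simp only [fromBlocks_apply₁₁, fromBlocks_apply₁₂]
      rw [hrow a, hbrow a]; ring
    | inr a =>
      rw [Fintype.sum_sum_type]
      simp only [fromBlocks_apply₂₁, fromBlocks_apply₂₂, hbT]
      rw [hrow a, hbrow a]; ring
  · rw [hNapp, hM1, hMb1]
    funext x
    cases x with
    | inl a => simp
    | inr a => simp
  · rw [hNapp, hM1, hMb1, hMn1, hMbn1]
    funext x
    cases x with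
    | inl a =>
      simp only [Sum.elim_inl, Pi.add_apply, Pi.smul_apply, smul_eq_mul]
      ring
    | inr a =>
      simp only [Sum.elim_inr, Pi.add_apply, Pi.smul_apply, smul_eq_mul]
      ring
  · intro lam v hv hs
    have hb := hMbv lam v hv hs
    have hbneg : Mbar *ᵥ (-v) = lam • v := by
      rw [Matrix.mulVec_neg, hb]; funext a; simp
    have hvneg : M *ᵥ (-v) = (-lam) • v := by
      rw [Matrix.mulVec_neg, hv]; funext a; simp
    constructor
    · rw [hNapp, hv, hb]
      funext x
      cases x with
      | inl a => simp
      | inr a => simp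
    · rw [hNapp, hv, hb, hbneg, hvneg]
      funext x
      cases x with
      | inl a =>
        simp only [Sum.elim_inl, Pi.add_apply, Pi.smul_apply, smul_eq_mul]
        ring
      | inr a =>
        simp only [Sum.elim_inr, Pi.add_apply, Pi.smul_apply, smul_eq_mul, Pi.neg_apply]
        ring
  · intro v hv
    rw [Fintype.linearIndependent_iff] at hv ⊢
    intro g hg
    have key : ∀ y : Fin n ⊕ Fin n,
        (∑ x, g x • Sum.elim (Sum.elim (v ·) (v ·) x) (Sum.elim (v ·) (-v ·) x)) y = 0 := by
      intro y; rw [hg]; rfl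
    have h1 : ∀ a : Fin n, ∑ i, (g (Sum.inl i) + g (Sum.inr i)) * v i a = 0 := by
      intro a
      have := key (Sum.inl a)
      rw [Finset.sum_apply, Fintype.sum_sum_type] at this
      simp only [Pi.smul_apply, Sum.elim_inl, Sum.elim_inr, smul_eq_mul, Pi.neg_apply] at this
      rw [← this, ← Finset.sum_add_distrib]
      exact Finset.sum_congr rfl fun i _ => by ring
    have h2 : ∀ a : Fin n, ∑ i, (g (Sum.inl i) - g (Sum.inr i)) * v i a = 0 := by
      intro a
      have := key (Sum.inr a)
      rw [Finset.sum_apply, Fintype.sum_sum_type] at this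
      simp only [Pi.smul_apply, Sum.elim_inl, Sum.elim_inr, smul_eq_mul, Pi.neg_apply] at this
      rw [← this, ← Finset.sum_add_distrib]
      exact Finset.sum_congr rfl fun i _ => by ring
    have hz1 : ∀ i, g (Sum.inl i) + g (Sum.inr i) = 0 := by
      apply hv (fun i => g (Sum.inl i) + g (Sum.inr i))
      funext a
      rw [Finset.sum_apply]
      simpa using h1 a
    have hz2 : ∀ i, g (Sum.inl i) - g (Sum.inr i) = 0 := by
      apply hv (fun i => g (Sum.inl i) - g (Sum.inr i))
      funext a
      rw [Finset.sum_apply]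
      simpa using h2 a
    intro x
    cases x with
    | inl i => have := hz1 i; have := hz2 i; linarith
    | inr i => have := hz1 i; have := hz2 i; linarith
end
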